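/- Monotonicity of the finite state projection: for the truncated CME generator A^Ω (a principal submatrix of the full Metzler generator A obtained by deleting states outside Ω), the truncated solution is entrywise bounded above by the full solution: exp(tA^Ω)(P₀|_Ω)(x) ≤ exp(tA)P₀(x) for all x ∈ Ω, t ≥ 0, whenever P₀ ≥ 0. -/

import Mathlib

/-!
Shifting a Metzler matrix by a large multiple of the identity makes it entrywise nonnegative,
and the shift only rescales the exponential by a positive scalar. For a nonnegative matrix `N`,
every term of the exponential series of a principal submatrix is dominated by the corresponding
entry of `N ^ k`: paths through the states kept are among all paths. So the exponential of the
truncated generator is entrywise below that of the full one, and both are nonnegative.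
-/

open Matrix NormedSpace Function

theorem Fintype.sum_comp_le_sum_of_injective {m n α : Type*} [Fintype m] [Fintype n]
    [AddCommMonoid α] [PartialOrder α] [IsOrderedAddMonoid α] {e : m → n} (he : Injective e)
    {f : n → α} (hf : ∀ y, 0 ≤ f y) : ∑ z, f (e z) ≤ ∑ y, f y := by
  calc ∑ z, f (e z) = ∑ y ∈ Finset.univ.map ⟨e, he⟩, f y := by rw [Finset.sum_map]; rfl
    _ ≤ ∑ y, f y := Finset.sum_le_univ_sum_of_nonneg hf

namespace Matrix

variable {m n : Type*}

def IsMetzler (A : Matrix n n ℝ) : Prop := ∀ i j, i ≠ j → 0 ≤ A i j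

theorem IsMetzler.smul {A : Matrix n n ℝ} (hA : A.IsMetzler) {t : ℝ} (ht : 0 ≤ t) :
    (t • A).IsMetzler :=
  fun i j hij => mul_nonneg ht (hA i j hij)

variable [Fintype m] [Fintype n]

section OrderedSemiring

variable {α : Type*} [Semiring α] [PartialOrder α] [IsOrderedRing α]

theorem mulVec_comp_le_of_apply_le {B : Matrix m m α} {N : Matrix n n α} {e : m → n}
    (he : Injective e) (hBN : ∀ i j, B i j ≤ N (e i) (e j)) (hN : ∀ i j, 0 ≤ N i j)
    {v : n → α} (hv : ∀ y, 0 ≤ v y) (i : m) : (B *ᵥ (v ∘ e)) i ≤ (N *ᵥ v) (e i) := by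
  calc (B *ᵥ (v ∘ e)) i = ∑ z, B i z * v (e z) := rfl
    _ ≤ ∑ z, N (e i) (e z) * v (e z) :=
        Finset.sum_le_sum fun z _ => mul_le_mul_of_nonneg_right (hBN i z) (hv _)
    _ ≤ ∑ y, N (e i) y * v y :=
        Fintype.sum_comp_le_sum_of_injective he fun y => mul_nonneg (hN (e i) y) (hv y)

variable [DecidableEq m] [DecidableEq n]

theorem submatrix_pow_apply_le {M : Matrix n n α} (hM : ∀ i j, 0 ≤ M i j) {e : m → n}
    (he : Injective e) (k : ℕ) (i j : m) :
    (M.submatrix e e ^ k) i j ≤ (M ^ k) (e i) (e j) := by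
  induction k generalizing j with
  | zero => simp [← submatrix_one _ he]
  | succ k ih =>
    rw [pow_succ, pow_succ, mul_apply, mul_apply]
    calc ∑ z, (M.submatrix e e ^ k) i z * M (e z) (e j)
        ≤ ∑ z, (M ^ k) (e i) (e z) * M (e z) (e j) :=
          Finset.sum_le_sum fun z _ => mul_le_mul_of_nonneg_right (ih z) (hM _ _)
      _ ≤ ∑ y, (M ^ k) (e i) y * M y (e j) :=
          Fintype.sum_comp_le_sum_of_injective he fun y =>
            mul_nonneg (pow_apply_nonneg hM k (e i) y) (hM y (e j))

end OrderedSemiring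

variable [DecidableEq m] [DecidableEq n]

theorem hasSum_exp_apply (M : Matrix n n ℝ) (i j : n) :
    HasSum (fun k : ℕ => (k.factorial : ℝ)⁻¹ * (M ^ k) i j) (exp M i j) := by
  let : NormedRing (Matrix n n ℝ) := Matrix.linftyOpNormedRing
  let : NormedAlgebra ℝ (Matrix n n ℝ) := Matrix.linftyOpNormedAlgebra
  exact Pi.hasSum.1 (Pi.hasSum.1 (exp_series_hasSum_exp' (𝕂 := ℝ) M) i) j

theorem exp_apply_nonneg {M : Matrix n n ℝ} (hM : ∀ i j, 0 ≤ M i j) (i j : n) :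
    0 ≤ exp M i j :=
  (hasSum_exp_apply M i j).nonneg fun k => mul_nonneg (by positivity) (pow_apply_nonneg hM k i j)

theorem exp_submatrix_apply_le {M : Matrix n n ℝ} (hM : ∀ i j, 0 ≤ M i j) {e : m → n}
    (he : Injective e) (i j : m) : exp (M.submatrix e e) i j ≤ exp M (e i) (e j) :=
  hasSum_le (fun k => mul_le_mul_of_nonneg_left (submatrix_pow_apply_le hM he k i j)
    (by positivity)) (hasSum_exp_apply _ i j) (hasSum_exp_apply M (e i) (e j))

theorem exp_add_smul_one (M : Matrix n n ℝ) (r : ℝ) :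
    exp (M + r • 1) = Real.exp r • exp M := by
  rw [exp_add_of_commute _ _ ((Commute.one_right M).smul_right r), smul_one_eq_diagonal,
    exp_diagonal, Pi.exp_def, ← Real.exp_eq_exp_ℝ, ← smul_one_eq_diagonal, mul_smul_one]

namespace IsMetzler

variable {A : Matrix n n ℝ}

theorem exists_add_smul_one_nonneg (hA : A.IsMetzler) : ∃ c : ℝ, ∀ i j, 0 ≤ (A + c • 1) i j := by
  refine ⟨∑ k, |A k k|, fun i j => ?_⟩
  rcases eq_or_ne i j with rfl | hij
  · have : |A i i| ≤ ∑ k, |A k k| :=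
      Finset.single_le_sum (f := fun k => |A k k|) (fun k _ => abs_nonneg _) (Finset.mem_univ i)
    simp only [add_apply, smul_apply, one_apply_eq, smul_eq_mul, mul_one]
    linarith [neg_abs_le (A i i)]
  · simpa [one_apply_ne hij] using hA i j hij

theorem exp_apply_nonneg (hA : A.IsMetzler) (i j : n) : 0 ≤ exp A i j := by
  obtain ⟨c, hc⟩ := hA.exists_add_smul_one_nonneg
  have hshift : A = (A + c • 1) + (-c) • 1 := by rw [neg_smul]; abel
  rw [hshift, exp_add_smul_one, smul_apply, smul_eq_mul]
  exact mul_nonneg (Real.exp_nonneg _) (Matrix.exp_apply_nonneg hc i j)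

theorem exp_submatrix_apply_le (hA : A.IsMetzler) {e : m → n} (he : Injective e) (i j : m) :
    exp (A.submatrix e e) i j ≤ exp A (e i) (e j) := by
  obtain ⟨c, hc⟩ := hA.exists_add_smul_one_nonneg
  have hshift : A = (A + c • 1) + (-c) • 1 := by rw [neg_smul]; abel
  have hshift' : A.submatrix e e = (A + c • 1).submatrix e e + (-c) • 1 := by
    rw [show (A + c • 1).submatrix e e = A.submatrix e e + c • (1 : Matrix n n ℝ).submatrix e e
      from rfl, submatrix_one _ he, neg_smul]
    abel
  rw [hshift', hshift, exp_add_smul_one, exp_add_smul_one, smul_apply, smul_apply, smul_eq_mul,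
    smul_eq_mul, ← hshift]
  exact mul_le_mul_of_nonneg_left (Matrix.exp_submatrix_apply_le hc he i j) (Real.exp_nonneg _)

end IsMetzler

end Matrix

theorem fsp_monotonicity_general (S : Type*) [Fintype S] [DecidableEq S]
    (Ω : Set S) [DecidablePred (· ∈ Ω)]
    (A : Matrix S S ℝ)
    (hMetzler : ∀ i j, i ≠ j → 0 ≤ A i j)
    (P0 : S → ℝ) (hP0 : ∀ i, 0 ≤ P0 i) :
    ∀ t : ℝ, 0 ≤ t → ∀ x : Ω,
      (NormedSpace.exp (t • A.submatrix (Subtype.val : Ω → S) Subtype.val)).mulVec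
        (fun y : Ω => P0 y) x ≤
      (NormedSpace.exp (t • A)).mulVec P0 x := by
  intro t ht x
  have htA : (t • A).IsMetzler := IsMetzler.smul hMetzler ht
  exact mulVec_comp_le_of_apply_le Subtype.val_injective
    (htA.exp_submatrix_apply_le Subtype.val_injective) htA.exp_apply_nonneg hP0 x

/-- monotonicity of the finite state projection: the truncated
solution is entrywise bounded above by the full solution. -/
theorem fsp_monotonicity (S : Type*) [Fintype S] [DecidableEq S]
    (Ω : Set S) [DecidablePred (· ∈ Ω)]
    (A : Matrix S S ℝ)
    (hMetzler : ∀ i j, i ≠ j → 0 ≤ A i j)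
    (hcols : ∀ j, ∑ i, A i j ≤ 0)
    (P0 : S → ℝ) (hP0 : ∀ i, 0 ≤ P0 i) :
    ∀ t : ℝ, 0 ≤ t → ∀ x : Ω,
      (NormedSpace.exp (t • A.submatrix (Subtype.val : Ω → S) Subtype.val)).mulVec
        (fun y : Ω => P0 y) x ≤
      (NormedSpace.exp (t • A)).mulVec P0 x :=
  fsp_monotonicity_general S Ω A hMetzler P0 hP0
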